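/- arXiv:1704.01041 — 2 statements merged into one kernel-verified Lean document; each statement's English description precedes it below -/
import Mathlib

section
/- Let X be a random vector in ℝⁿ with finite moments of all orders. If X' is an independent copy of X, and X_rot, X_rot' are independent copies of the rotational symmetrization of X, then for every positive integer r, E[⟨X,X'⟩^r] ≥ E[⟨X_rot, X_rot'⟩^r]. -/
open MeasureTheory ProbabilityTheory Real
open scoped RealInnerProductSpace ENNReal

noncomputable section

/-- The standard gaussian measure on `ℝⁿ` (mean `0`, identity covariance). -/
def stdGaussian (n : ℕ) : Measure (EuclideanSpace ℝ (Fin n)) :=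
  (Measure.pi fun _ : Fin n => gaussianReal 0 1).map
    (EuclideanSpace.equiv (Fin n) ℝ).symm

/-- The uniform probability distribution on the unit sphere `S^{n-1}`, realized as the
pushforward of the standard gaussian under normalization. -/
def sphereUniform (n : ℕ) : Measure (EuclideanSpace ℝ (Fin n)) :=
  (stdGaussian n).map fun x => ‖x‖⁻¹ • x

/-- The `r`-th moment tensor `M^r = E[X^{⊗ r}]` of a distribution `ν` on `ℝⁿ`, realized in
coordinates as the element of the Euclidean space indexed by multi-indices `Fin r → Fin n`
whose `(i₁,…,i_r)` entry is `E[X_{i₁} ⋯ X_{i_r}]`.  The Euclidean inner product on this space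
is exactly the tensor inner product satisfying `⟪u^{⊗r}, v^{⊗r}⟫ = ⟪u,v⟫^r`. -/
def momentTensor {n : ℕ} (r : ℕ) (ν : Measure (EuclideanSpace ℝ (Fin n))) :
    EuclideanSpace ℝ (Fin r → Fin n) :=
  (EuclideanSpace.equiv (Fin r → Fin n) ℝ).symm fun idx => ∫ x, ∏ j, x (idx j) ∂ν

/-- The distribution of the rotational symmetrization `X_rot = ‖X‖·θ` of a distribution `ν`
on `ℝⁿ`, where `θ` is uniform on the sphere and independent of `‖X‖`. -/
def rotSymMeas {n : ℕ} (ν : Measure (EuclideanSpace ℝ (Fin n))) :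
    Measure (EuclideanSpace ℝ (Fin n)) :=
  ((ν.map fun x => ‖x‖).prod (sphereUniform n)).map fun p => p.1 • p.2

/-- The `r`-th eccentricity tensor `E^r_X = M^r_X − M^r_{X_rot}`. -/
def eccTensor {n : ℕ} (r : ℕ) (ν : Measure (EuclideanSpace ℝ (Fin n))) :
    EuclideanSpace ℝ (Fin r → Fin n) :=
  momentTensor r ν - momentTensor r (rotSymMeas ν)

variable {Ω : Type*} [MeasurableSpace Ω]

/-- The test matrix `Φ_{X,α} = E[e^{−α‖X‖²} X Xᵀ] / E[e^{−α‖X‖²}]`. -/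
def PhiMat {n : ℕ} (P : Measure Ω) (X : Ω → EuclideanSpace ℝ (Fin n)) (α : ℝ) :
    Matrix (Fin n) (Fin n) ℝ :=
  (∫ ω, Real.exp (-α * ‖X ω‖ ^ 2) ∂P)⁻¹ •
    Matrix.of fun i j => ∫ ω, Real.exp (-α * ‖X ω‖ ^ 2) * (X ω i * X ω j) ∂P

/-- The test matrix `Ψ_{X,α} = E[e^{−α⟨X,X'⟩} X (X')ᵀ] / E[e^{−α⟨X,X'⟩}]`, where `X'` is an
independent copy of `X`. -/
def PsiMat {n : ℕ} (P : Measure Ω) (X X' : Ω → EuclideanSpace ℝ (Fin n)) (α : ℝ) :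
    Matrix (Fin n) (Fin n) ℝ :=
  (∫ ω, Real.exp (-α * ⟪X ω, X' ω⟫) ∂P)⁻¹ •
    Matrix.of fun i j => ∫ ω, Real.exp (-α * ⟪X ω, X' ω⟫) * (X ω i * X' ω j) ∂P

/-- The partition function `Z_{Φ,X}(α) = E[e^{−α‖X‖²}]`. -/
def ZPhi {n : ℕ} (P : Measure Ω) (X : Ω → EuclideanSpace ℝ (Fin n)) (α : ℝ) : ℝ :=
  ∫ ω, Real.exp (-α * ‖X ω‖ ^ 2) ∂P

/-- The partition function `Z_{Ψ,X}(α) = E[e^{−α⟨X,X'⟩}]`. -/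
def ZPsi {n : ℕ} (P : Measure Ω) (X X' : Ω → EuclideanSpace ℝ (Fin n)) (α : ℝ) : ℝ :=
  ∫ ω, Real.exp (-α * ⟪X ω, X' ω⟫) ∂P

/-- `Z_{Φ,g}` for the standard gaussian on `ℝⁿ`. -/
def ZPhiGauss (n : ℕ) (α : ℝ) : ℝ := ∫ x, Real.exp (-α * ‖x‖ ^ 2) ∂stdGaussian n

/-- `Z_{Ψ,g}` for the standard gaussian on `ℝⁿ`. -/
def ZPsiGauss (n : ℕ) (α : ℝ) : ℝ :=
  ∫ p, Real.exp (-α * ⟪p.1, p.2⟫) ∂((stdGaussian n).prod (stdGaussian n))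

/-- `X` is subgaussian with subgaussian norm at most `K`:
every unit marginal `⟨X,v⟩` has `ψ₂`-norm at most `K`. -/
def SubgaussianLE {n : ℕ} (P : Measure Ω) (X : Ω → EuclideanSpace ℝ (Fin n)) (K : ℝ) : Prop :=
  ∀ v : EuclideanSpace ℝ (Fin n), ‖v‖ = 1 →
    ∫ ω, Real.exp (⟪X ω, v⟫ ^ 2 / K ^ 2) ∂P ≤ 2

/-- `X` is a subexponential random vector: the `ψ₁`-norms of the unit marginals `⟨X,v⟩` are
uniformly bounded. -/
def SubExp {n : ℕ} (P : Measure Ω) (X : Ω → EuclideanSpace ℝ (Fin n)) : Prop :=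
  ∃ K : ℝ, 0 < K ∧ ∀ v : EuclideanSpace ℝ (Fin n), ‖v‖ = 1 →
    ∫ ω, Real.exp (|⟪X ω, v⟫| / K) ∂P ≤ 2

/-- The `r`-th moment of a one-dimensional standard gaussian, `E[⟨g,v⟩^r]` for a unit vector
`v`. -/
def gaussMoment (r : ℕ) : ℝ := ∫ t : ℝ, t ^ r ∂gaussianReal 0 1

/-- `γ_r = E[|⟨g,v⟩|^r]` for a unit vector `v`. -/
def gammaMoment (r : ℕ) : ℝ := ∫ t : ℝ, |t| ^ r ∂gaussianReal 0 1

/-- The deviation from gaussian moments,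
`D_{X,r} = sup_{v ∈ S^{n-1}} |E[⟨X,v⟩^r] − E[⟨g,v⟩^r]|`. -/
def Ddev {n : ℕ} (P : Measure Ω) (X : Ω → EuclideanSpace ℝ (Fin n)) (r : ℕ) : ℝ :=
  ⨆ v : Metric.sphere (0 : EuclideanSpace ℝ (Fin n)) 1,
    |(∫ ω, ⟪X ω, (v : EuclideanSpace ℝ (Fin n))⟫ ^ r ∂P) - gaussMoment r|

/-- Coordinates (w.r.t. a fixed orthonormal basis of `E`) of the orthogonal projection of `X`
onto the subspace `E`; this represents the component `X̃` of `X` in `E`. -/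
def ngcaCoord {n : ℕ} (E : Submodule ℝ (EuclideanSpace ℝ (Fin n)))
    (X : Ω → EuclideanSpace ℝ (Fin n)) (ω : Ω) :
    EuclideanSpace ℝ (Fin (Module.finrank ℝ E)) :=
  (stdOrthonormalBasis ℝ E).repr (E.orthogonalProjectionOnto (X ω))

/-- The empirical test matrix `Φ̂` built from the data points `Xs 1, …, Xs N`. -/
def PhiHat {n N : ℕ} (Xs : Fin N → EuclideanSpace ℝ (Fin n)) (α : ℝ) :
    Matrix (Fin n) (Fin n) ℝ :=
  (∑ i, Real.exp (-α * ‖Xs i‖ ^ 2))⁻¹ •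
    Matrix.of fun a b => ∑ i, Real.exp (-α * ‖Xs i‖ ^ 2) * (Xs i a * Xs i b)

/-- The empirical test matrix `Ψ̂` built from the data points `Xs 1, …, Xs N, Xs' 1, …, Xs' N`. -/
def PsiHat {n N : ℕ} (Xs Xs' : Fin N → EuclideanSpace ℝ (Fin n)) (α : ℝ) :
    Matrix (Fin n) (Fin n) ℝ :=
  (2 * ∑ i, Real.exp (-α * ⟪Xs i, Xs' i⟫))⁻¹ •
    Matrix.of fun a b => ∑ i, Real.exp (-α * ⟪Xs i, Xs' i⟫) *
      (Xs i a * Xs' i b + Xs' i a * Xs i b)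

/-- The ℓ²→ℓ² operator norm of a real `n × n` matrix. -/
def opNorm {n : ℕ} (M : Matrix (Fin n) (Fin n) ℝ) : ℝ :=
  ‖Matrix.toEuclideanCLM (𝕜 := ℝ) M‖

/-- The matrix (in the standard basis) of the orthogonal projection onto a subspace `F ⊆ ℝⁿ`;
if the columns of `U` form an orthonormal basis of `F` this is `U Uᵀ`. -/
def projMat {n : ℕ} (F : Submodule ℝ (EuclideanSpace ℝ (Fin n))) :
    Matrix (Fin n) (Fin n) ℝ :=
  Matrix.of fun i j =>
    ⟪(F.subtypeL.comp F.orthogonalProjectionOnto) (EuclideanSpace.single j (1 : ℝ)),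
      EuclideanSpace.single i (1 : ℝ)⟫

/-- The distance `d(F,F') = ‖U Uᵀ − U' (U')ᵀ‖_F` between two subspaces of `ℝⁿ`
(the Frobenius norm of the difference of the orthogonal projections). -/
def subDist {n : ℕ} (F F' : Submodule ℝ (EuclideanSpace ℝ (Fin n))) : ℝ :=
  Real.sqrt (∑ i, ∑ j, (projMat F i j - projMat F' i j) ^ 2)

/-- The span of all eigenvectors of a symmetric matrix `M` whose eigenvalue is farther than
`β` from the reference value `c`. -/
def eigSpanFar {n : ℕ} (M : Matrix (Fin n) (Fin n) ℝ) (c β : ℝ) :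
    Submodule ℝ (EuclideanSpace ℝ (Fin n)) :=
  ⨆ lam ∈ {l : ℝ | β < |l - c|}, Module.End.eigenspace (Matrix.toEuclideanLin M) lam

/-!
With `M_ν` the `r`-th moment tensor of a law `ν`, expanding `⟪x, y⟫ ^ r` into monomials gives
`E[⟪X, X'⟫ ^ r] = ‖M_X‖²` for independent `X, X'`, and likewise for `X_rot`. Since the uniform
measure on the sphere is rotation invariant, `y ↦ E[⟪y, X_rot⟫ ^ r]` is a constant multiple of
`‖y‖ ^ r`; as `X` and `X_rot` have the same radial law, this gives
`⟪M_X, M_{X_rot}⟫ = ‖M_{X_rot}‖²`. By Pythagoras, `‖M_X‖² = ‖M_{X_rot}‖² + ‖M_X - M_{X_rot}‖²`.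
-/

lemma stdGaussian_eq_stdGaussian_euclideanSpace (n : ℕ) :
    stdGaussian n = ProbabilityTheory.stdGaussian (EuclideanSpace ℝ (Fin n)) :=
  map_pi_eq_stdGaussian

instance (n : ℕ) : IsProbabilityMeasure (stdGaussian n) := by
  rw [stdGaussian_eq_stdGaussian_euclideanSpace]
  infer_instance

lemma map_stdGaussian_linearIsometryEquiv {n : ℕ}
    (O : EuclideanSpace ℝ (Fin n) ≃ₗᵢ[ℝ] EuclideanSpace ℝ (Fin n)) :
    (stdGaussian n).map O = stdGaussian n := by
  rw [stdGaussian_eq_stdGaussian_euclideanSpace, stdGaussian_map]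

lemma stdGaussian_singleton_zero {n : ℕ} (hn : 0 < n) : stdGaussian n {0} = 0 := by
  have : Nonempty (Fin n) := ⟨⟨0, hn⟩⟩
  have := nullSingletonClass_gaussianReal (μ := 0) one_ne_zero
  have hpre : (EuclideanSpace.equiv (Fin n) ℝ).symm ⁻¹' {0} = {0} := by
    ext
    simp
  rw [_root_.stdGaussian, Measure.map_apply (by fun_prop) (measurableSet_singleton _), hpre]
  exact measure_singleton _

instance (n : ℕ) : IsProbabilityMeasure (sphereUniform n) :=
  Measure.isProbabilityMeasure_map (by fun_prop)

lemma map_sphereUniform_linearIsometryEquiv {n : ℕ}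
    (O : EuclideanSpace ℝ (Fin n) ≃ₗᵢ[ℝ] EuclideanSpace ℝ (Fin n)) :
    (sphereUniform n).map O = sphereUniform n := by
  have hcomm : (O ∘ fun x => ‖x‖⁻¹ • x) = (fun x => ‖x‖⁻¹ • x) ∘ O := by
    ext1 x
    simp
  rw [sphereUniform, Measure.map_map (by fun_prop) (by fun_prop), hcomm,
    ← Measure.map_map (by fun_prop) (by fun_prop),
    map_stdGaussian_linearIsometryEquiv]

lemma ae_norm_eq_one_sphereUniform {n : ℕ} (hn : 0 < n) :
    ∀ᵐ θ ∂sphereUniform n, ‖θ‖ = 1 := by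
  rw [sphereUniform, ae_map_iff (by fun_prop)
    (measurableSet_eq_fun measurable_norm measurable_const)]
  filter_upwards [measure_eq_zero_iff_ae_notMem.mp (stdGaussian_singleton_zero hn)] with x hx
  rw [norm_smul, norm_inv, norm_norm, inv_mul_cancel₀ (norm_ne_zero_iff.mpr hx)]

section RotationInvariant

variable {E : Type*} [NormedAddCommGroup E] [InnerProductSpace ℝ E] [MeasurableSpace E]
  [BorelSpace E] {σ : Measure E}

lemma integral_comp_inner_eq_of_norm_eq (hσ : ∀ O : E ≃ₗᵢ[ℝ] E, σ.map O = σ) (f : ℝ → ℝ)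
    {x y : E} (hxy : ‖x‖ = ‖y‖) : ∫ θ, f ⟪x, θ⟫ ∂σ = ∫ θ, f ⟪y, θ⟫ ∂σ := by
  set O := (ℝ ∙ (x - y))ᗮ.reflection
  have hOx : O x = y := Submodule.reflection_sub hxy
  calc ∫ θ, f ⟪x, θ⟫ ∂σ = ∫ θ, f ⟪O x, O θ⟫ ∂σ := by simp_rw [O.inner_map_map]
    _ = ∫ θ, f ⟪O x, θ⟫ ∂σ :=
      MeasurePreserving.integral_comp' (f := O.toMeasurableEquiv) ⟨by fun_prop, hσ O⟩
        fun θ => f ⟪O x, θ⟫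
    _ = ∫ θ, f ⟪y, θ⟫ ∂σ := by rw [hOx]

lemma integral_inner_pow_eq_norm_pow_mul [IsProbabilityMeasure σ]
    (hσ : ∀ O : E ≃ₗᵢ[ℝ] E, σ.map O = σ) (r : ℕ) {u : E} (hu : ‖u‖ = 1) (x : E) :
    ∫ θ, ⟪x, θ⟫ ^ r ∂σ = ‖x‖ ^ r * ∫ θ, ⟪u, θ⟫ ^ r ∂σ := by
  rcases eq_or_ne x 0 with rfl | hx
  · cases r <;> simp
  have hunit : ‖‖x‖⁻¹ • x‖ = ‖u‖ := by
    rw [hu, norm_smul, norm_inv, norm_norm, inv_mul_cancel₀ (norm_ne_zero_iff.mpr hx)]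
  have hscale : ∀ θ, ⟪x, θ⟫ ^ r = ‖x‖ ^ r * ⟪‖x‖⁻¹ • x, θ⟫ ^ r := fun θ => by
    rw [real_inner_smul_left, mul_pow, ← mul_assoc, ← mul_pow,
      mul_inv_cancel₀ (norm_ne_zero_iff.mpr hx), one_pow, one_mul]
  simp_rw [hscale]
  rw [integral_const_mul, integral_comp_inner_eq_of_norm_eq hσ (· ^ r) hunit]

end RotationInvariant

section MomentTensor

variable {n : ℕ}

lemma inner_pow_eq_sum_prod (r : ℕ) (x y : EuclideanSpace ℝ (Fin n)) :
    ⟪x, y⟫ ^ r = ∑ idx : Fin r → Fin n, (∏ j, x (idx j)) * ∏ j, y (idx j) := by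
  simp_rw [EuclideanSpace.inner_eq_star_dotProduct, ← Finset.prod_mul_distrib]
  rw [dotProduct, Fintype.sum_pow]
  simp [mul_comm]

lemma inner_momentTensor (r : ℕ) (ξ₁ ξ₂ : Measure (EuclideanSpace ℝ (Fin n))) :
    ⟪momentTensor r ξ₁, momentTensor r ξ₂⟫ =
      ∑ idx : Fin r → Fin n, (∫ x, ∏ j, x (idx j) ∂ξ₁) * ∫ x, ∏ j, x (idx j) ∂ξ₂ := by
  simp [momentTensor, PiLp.inner_apply, mul_comm]

lemma integrable_prod_apply_of_integrable_norm_pow {r : ℕ}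
    {ξ : Measure (EuclideanSpace ℝ (Fin n))} (hξ : Integrable (fun x => ‖x‖ ^ r) ξ)
    (idx : Fin r → Fin n) :
    Integrable (fun x => ∏ j, x (idx j)) ξ := by
  refine hξ.mono' (by fun_prop) (ae_of_all _ fun x => ?_)
  calc ‖∏ j, x (idx j)‖ = ∏ j, ‖x (idx j)‖ := norm_prod _ _
    _ ≤ ∏ _j : Fin r, ‖x‖ :=
      Finset.prod_le_prod (fun _ _ => norm_nonneg _) fun j _ => PiLp.norm_apply_le x (idx j)
    _ = ‖x‖ ^ r := by simp

lemma integral_inner_pow_prod_eq_inner_momentTensor {r : ℕ}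
    {ξ₁ ξ₂ : Measure (EuclideanSpace ℝ (Fin n))} [SFinite ξ₁] [SFinite ξ₂]
    (h₁ : Integrable (fun x => ‖x‖ ^ r) ξ₁) (h₂ : Integrable (fun x => ‖x‖ ^ r) ξ₂) :
    ∫ p, ⟪p.1, p.2⟫ ^ r ∂(ξ₁.prod ξ₂) = ⟪momentTensor r ξ₁, momentTensor r ξ₂⟫ := by
  simp_rw [inner_pow_eq_sum_prod, inner_momentTensor]
  rw [integral_finsetSum _ fun idx _ =>
    (integrable_prod_apply_of_integrable_norm_pow h₁ idx).mul_prod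
      (integrable_prod_apply_of_integrable_norm_pow h₂ idx)]
  exact Finset.sum_congr rfl fun idx _ =>
    integral_prod_mul (fun x : EuclideanSpace ℝ (Fin n) => ∏ j, x (idx j))
      (fun x : EuclideanSpace ℝ (Fin n) => ∏ j, x (idx j))

end MomentTensor

section SmulProd

variable {E : Type*} [NormedAddCommGroup E] [NormedSpace ℝ E] [MeasurableSpace E] [BorelSpace E]
  [SecondCountableTopology E] {ν : Measure ℝ} {σ : Measure E}
  {F : E → ℝ} {f : ℝ → ℝ} {g : E → ℝ}

lemma integrable_map_smul_prod (hF : Measurable F) (hFfg : ∀ t θ, F (t • θ) = f t * g θ)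
    (hf : Integrable f ν) (hg : Integrable g σ) :
    Integrable F ((ν.prod σ).map fun p => p.1 • p.2) := by
  rw [integrable_map_measure hF.aestronglyMeasurable (by fun_prop)]
  simpa [Function.comp_def, hFfg] using hf.mul_prod hg

lemma integral_map_smul_prod [SFinite ν] [SFinite σ] (hF : Measurable F)
    (hFfg : ∀ t θ, F (t • θ) = f t * g θ) :
    ∫ y, F y ∂(ν.prod σ).map (fun p => p.1 • p.2) = (∫ t, f t ∂ν) * ∫ θ, g θ ∂σ := by
  rw [integral_map (by fun_prop) hF.aestronglyMeasurable]
  simp_rw [hFfg]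
  exact integral_prod_mul f g

end SmulProd

lemma integrable_inner_pow_prod {E : Type*} [NormedAddCommGroup E] [InnerProductSpace ℝ E]
    [MeasurableSpace E] [OpensMeasurableSpace E] [SecondCountableTopology E] {r : ℕ}
    {ξ₁ ξ₂ : Measure E} (h₁ : Integrable (fun x => ‖x‖ ^ r) ξ₁)
    (h₂ : Integrable (fun x => ‖x‖ ^ r) ξ₂) :
    Integrable (fun p : E × E => ⟪p.1, p.2⟫ ^ r) (ξ₁.prod ξ₂) := by
  refine (h₁.mul_prod h₂).mono' (by fun_prop) (ae_of_all _ fun p => ?_)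
  rw [norm_pow, ← mul_pow]
  exact pow_le_pow_left₀ (norm_nonneg _) (norm_inner_le_norm _ _) r

section RotSym

variable {n : ℕ} {μ : Measure (EuclideanSpace ℝ (Fin n))}

instance [IsProbabilityMeasure μ] : IsProbabilityMeasure (rotSymMeas μ) :=
  have : IsProbabilityMeasure (μ.map fun x => ‖x‖) :=
    Measure.isProbabilityMeasure_map (by fun_prop)
  Measure.isProbabilityMeasure_map (by fun_prop)

lemma norm_pow_ae_eq_one_sphereUniform (hn : 0 < n) (r : ℕ) :
    (fun θ => ‖θ‖ ^ r) =ᵐ[sphereUniform n] 1 := by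
  filter_upwards [ae_norm_eq_one_sphereUniform hn] with θ hθ
  simp [hθ]

lemma integrable_norm_pow_rotSymMeas (hn : 0 < n) {r : ℕ}
    (hμ : Integrable (fun x => ‖x‖ ^ r) μ) :
    Integrable (fun y => ‖y‖ ^ r) (rotSymMeas μ) := by
  refine integrable_map_smul_prod (f := fun t => |t| ^ r) (by fun_prop)
    (fun t θ => by rw [norm_smul, mul_pow, Real.norm_eq_abs]) ?_
    ((integrable_const 1).congr (norm_pow_ae_eq_one_sphereUniform hn r).symm)
  rw [integrable_map_measure (by fun_prop) (by fun_prop)]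
  simpa [Function.comp_def] using hμ

lemma integral_norm_pow_rotSymMeas [SFinite μ] (hn : 0 < n) (r : ℕ) :
    ∫ y, ‖y‖ ^ r ∂rotSymMeas μ = ∫ x, ‖x‖ ^ r ∂μ := by
  rw [rotSymMeas, integral_map_smul_prod (f := fun t => |t| ^ r) (by fun_prop)
    (fun t θ => by rw [norm_smul, mul_pow, Real.norm_eq_abs]),
    integral_congr_ae (norm_pow_ae_eq_one_sphereUniform hn r),
    integral_map (by fun_prop) (by fun_prop)]
  simp

lemma integral_inner_pow_rotSymMeas [SFinite μ] (r : ℕ) {u : EuclideanSpace ℝ (Fin n)}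
    (hu : ‖u‖ = 1) (x : EuclideanSpace ℝ (Fin n)) :
    ∫ y, ⟪x, y⟫ ^ r ∂rotSymMeas μ =
      (∫ z, ‖z‖ ^ r ∂μ) * (∫ θ, ⟪u, θ⟫ ^ r ∂sphereUniform n) * ‖x‖ ^ r := by
  rw [rotSymMeas, integral_map_smul_prod (f := fun t => t ^ r) (g := fun θ => ⟪x, θ⟫ ^ r)
    (by fun_prop) (fun t θ => by rw [real_inner_smul_right, mul_pow]),
    integral_map (by fun_prop) (by fun_prop),
    integral_inner_pow_eq_norm_pow_mul map_sphereUniform_linearIsometryEquiv r hu]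
  ring

lemma integral_inner_pow_prod_rotSymMeas [IsProbabilityMeasure μ] {r : ℕ}
    {ξ : Measure (EuclideanSpace ℝ (Fin n))} [SFinite ξ] (hξ : Integrable (fun x => ‖x‖ ^ r) ξ)
    (hρ : Integrable (fun y => ‖y‖ ^ r) (rotSymMeas μ)) {u : EuclideanSpace ℝ (Fin n)}
    (hu : ‖u‖ = 1) :
    ∫ p, ⟪p.1, p.2⟫ ^ r ∂(ξ.prod (rotSymMeas μ)) =
      (∫ z, ‖z‖ ^ r ∂μ) * (∫ θ, ⟪u, θ⟫ ^ r ∂sphereUniform n) * ∫ x, ‖x‖ ^ r ∂ξ := by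
  rw [integral_prod _ (integrable_inner_pow_prod hξ hρ)]
  simp_rw [integral_inner_pow_rotSymMeas r hu]
  exact integral_const_mul _ _

lemma inner_momentTensor_rotSymMeas [IsProbabilityMeasure μ] (hn : 0 < n) {r : ℕ}
    (hμ : Integrable (fun x => ‖x‖ ^ r) μ) :
    ⟪momentTensor r μ, momentTensor r (rotSymMeas μ)⟫ =
      ⟪momentTensor r (rotSymMeas μ), momentTensor r (rotSymMeas μ)⟫ := by
  have hρ := integrable_norm_pow_rotSymMeas hn hμ
  have hu : ‖EuclideanSpace.single (⟨0, hn⟩ : Fin n) (1 : ℝ)‖ = 1 := by simp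
  rw [← integral_inner_pow_prod_eq_inner_momentTensor hμ hρ,
    ← integral_inner_pow_prod_eq_inner_momentTensor hρ hρ,
    integral_inner_pow_prod_rotSymMeas hμ hρ hu, integral_inner_pow_prod_rotSymMeas hρ hρ hu,
    integral_norm_pow_rotSymMeas hn]

end RotSym

lemma norm_sq_eq_norm_sq_add_norm_sub_sq_of_inner_eq {F : Type*} [NormedAddCommGroup F]
    [InnerProductSpace ℝ F] {a b : F} (h : ⟪a, b⟫ = ⟪b, b⟫) :
    ‖a‖ ^ 2 = ‖b‖ ^ 2 + ‖a - b‖ ^ 2 := by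
  rw [norm_sub_sq_real, h, real_inner_self_eq_norm_sq]
  ring

lemma norm_momentTensor_sq_eq_add_norm_eccTensor_sq {n : ℕ} (hn : 0 < n)
    {μ : Measure (EuclideanSpace ℝ (Fin n))} [IsProbabilityMeasure μ] {r : ℕ}
    (hμ : Integrable (fun x => ‖x‖ ^ r) μ) :
    ‖momentTensor r μ‖ ^ 2 = ‖momentTensor r (rotSymMeas μ)‖ ^ 2 + ‖eccTensor r μ‖ ^ 2 :=
  norm_sq_eq_norm_sq_add_norm_sub_sq_of_inner_eq (inner_momentTensor_rotSymMeas hn hμ)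

lemma integral_inner_pow_eq_inner_momentTensor_of_indepFun {n : ℕ} {P : Measure Ω}
    [IsFiniteMeasure P] {X Y : Ω → EuclideanSpace ℝ (Fin n)} (hX : Measurable X)
    (hY : Measurable Y) (hXY : IndepFun X Y P) {r : ℕ}
    (hXr : Integrable (fun x => ‖x‖ ^ r) (P.map X))
    (hYr : Integrable (fun y => ‖y‖ ^ r) (P.map Y)) :
    ∫ ω, ⟪X ω, Y ω⟫ ^ r ∂P = ⟪momentTensor r (P.map X), momentTensor r (P.map Y)⟫ := by
  rw [← integral_inner_pow_prod_eq_inner_momentTensor hXr hYr,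
    ← (indepFun_iff_map_prod_eq_prod_map_map hX.aemeasurable hY.aemeasurable).mp hXY,
    integral_map (by fun_prop) (by fun_prop)]

theorem inner_moment_minimization_general
    {Ω : Type*} [MeasurableSpace Ω] (P : Measure Ω) [IsProbabilityMeasure P]
    {n : ℕ} (X X' Xrot Xrot' : Ω → EuclideanSpace ℝ (Fin n))
    (hX : Measurable X) (hX' : Measurable X') (hXr : Measurable Xrot) (hXr' : Measurable Xrot')
    (hcopy : Measure.map X' P = Measure.map X P)
    (hindep : IndepFun X X' P)
    (hrot : Measure.map Xrot P = rotSymMeas (Measure.map X P))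
    (hrot' : Measure.map Xrot' P = rotSymMeas (Measure.map X P))
    (hindeprot : IndepFun Xrot Xrot' P)
    (hmom : ∀ k : ℕ, Integrable (fun ω => ‖X ω‖ ^ k) P)
    (r : ℕ) :
    (∫ ω, ⟪Xrot ω, Xrot' ω⟫ ^ r ∂P) ≤ ∫ ω, ⟪X ω, X' ω⟫ ^ r ∂P := by
  obtain rfl | hn := n.eq_zero_or_pos
  · simp [Subsingleton.elim (X _) 0, Subsingleton.elim (Xrot _) 0]
  have : IsProbabilityMeasure (P.map X) := Measure.isProbabilityMeasure_map hX.aemeasurable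
  have hμ : Integrable (fun x => ‖x‖ ^ r) (P.map X) :=
    (integrable_map_measure (by fun_prop) hX.aemeasurable).mpr (hmom r)
  have hρ := integrable_norm_pow_rotSymMeas hn hμ
  rw [integral_inner_pow_eq_inner_momentTensor_of_indepFun hXr hXr' hindeprot (hrot ▸ hρ)
      (hrot' ▸ hρ), hrot, hrot',
    integral_inner_pow_eq_inner_momentTensor_of_indepFun hX hX' hindep hμ (hcopy ▸ hμ), hcopy,
    real_inner_self_eq_norm_sq, real_inner_self_eq_norm_sq,
    norm_momentTensor_sq_eq_add_norm_eccTensor_sq hn hμ]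
  exact le_add_of_nonneg_right (sq_nonneg _)

/-- **Minimization.**  With `X'` an independent copy of `X` and `X_rot, X_rot'` independent
copies of the rotational symmetrization of `X` (all with finite moments of all orders),
`E[⟨X,X'⟩^r] ≥ E[⟨X_rot, X_rot'⟩^r]` for every positive integer `r`. -/
theorem inner_moment_minimization
    {Ω : Type*} [MeasurableSpace Ω] (P : Measure Ω) [IsProbabilityMeasure P]
    {n : ℕ} (X X' Xrot Xrot' : Ω → EuclideanSpace ℝ (Fin n))
    (hX : Measurable X) (hX' : Measurable X') (hXr : Measurable Xrot) (hXr' : Measurable Xrot')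
    (hcopy : Measure.map X' P = Measure.map X P)
    (hindep : IndepFun X X' P)
    (hrot : Measure.map Xrot P = rotSymMeas (Measure.map X P))
    (hrot' : Measure.map Xrot' P = rotSymMeas (Measure.map X P))
    (hindeprot : IndepFun Xrot Xrot' P)
    (hmom : ∀ k : ℕ, Integrable (fun ω => ‖X ω‖ ^ k) P)
    (r : ℕ) (hr : 0 < r) :
    (∫ ω, ⟪Xrot ω, Xrot' ω⟫ ^ r ∂P) ≤ ∫ ω, ⟪X ω, X' ω⟫ ^ r ∂P :=
  inner_moment_minimization_general P X X' Xrot Xrot' hX hX' hXr hXr' hcopy hindep hrot hrot'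
    hindeprot hmom r

end
end

section
/- Let X follow the isotropic NGCA model, with E spanned by the first d standard basis vectors. Then for any α for which the test matrices are defined, Φ_{X,α} and Ψ_{X,α} are block diagonal with respect to the decomposition ℝⁿ = E ⊕ E⊥: the top-left d×d block of Φ_{X,α} equals Φ_{X̃,α}, its bottom-right (n−d)×(n−d) block equals Φ_{g,α}, the off-diagonal blocks vanish, and similarly Ψ_{X,α} has diagonal blocks Ψ_{X̃,α} and Ψ_{g,α} and zero off-diagonal blocks. -/
open MeasureTheory ProbabilityTheory Real
open scoped RealInnerProductSpace ENNReal

noncomputable section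

variable {Ω : Type*} [MeasurableSpace Ω]

/-- The component of `x ∈ ℝ^{d+m}` in the span `E` of the first `d` coordinates. -/
def firstCoords {d m : ℕ} (x : EuclideanSpace ℝ (Fin (d + m))) : EuclideanSpace ℝ (Fin d) :=
  (EuclideanSpace.equiv (Fin d) ℝ).symm fun i => x (Fin.castAdd m i)

/-- The component of `x ∈ ℝ^{d+m}` in the orthogonal complement `E⊥` of the span of the
first `d` coordinates. -/
def lastCoords {d m : ℕ} (x : EuclideanSpace ℝ (Fin (d + m))) : EuclideanSpace ℝ (Fin m) :=
  (EuclideanSpace.equiv (Fin m) ℝ).symm fun j => x (Fin.natAdd d j)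

/-!
Since `‖x‖² = ⟪x, x⟫`, the matrix `Φ_{X,α}` is the matrix `Ψ` built from the pair `(X, X)`, so both
claims are instances of one statement about a pair `(X, X')` whose `E`-parts `(X̃, X̃')` are
independent of its `E⊥`-parts `(g, g')`, the law of `(g, g')` being symmetric; this holds for
`X' = X` and for an independent copy `X'`. The weight factors,
`e^{-α⟪x, x'⟫} = e^{-α⟪x̃, x̃'⟫} e^{-α⟪g, g'⟫}`, so every entry of `E[e^{-α⟪X, X'⟫} X X'ᵀ]` and
the normaliser split into an `E`-factor times an `E⊥`-factor. In a diagonal block the other factor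
of the numerator is that of the normaliser and cancels; it is positive because, by independence,
integrability of the normaliser forces integrability of each factor. In an off-diagonal block the
`E⊥`-factor integrates an odd function against the symmetric law of `(g, g')`, so it vanishes.
-/

theorem firstCoords_apply {d m : ℕ} (x : EuclideanSpace ℝ (Fin (d + m))) (i : Fin d) :
    firstCoords x i = x (Fin.castAdd m i) := rfl

theorem lastCoords_apply {d m : ℕ} (x : EuclideanSpace ℝ (Fin (d + m))) (j : Fin m) :
    lastCoords x j = x (Fin.natAdd d j) := rfl

@[fun_prop]
theorem measurable_firstCoords {d m : ℕ} :
    Measurable (firstCoords : EuclideanSpace ℝ (Fin (d + m)) → EuclideanSpace ℝ (Fin d)) := by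
  unfold firstCoords; fun_prop

@[fun_prop]
theorem measurable_lastCoords {d m : ℕ} :
    Measurable (lastCoords : EuclideanSpace ℝ (Fin (d + m)) → EuclideanSpace ℝ (Fin m)) := by
  unfold lastCoords; fun_prop

theorem inner_eq_inner_firstCoords_add_inner_lastCoords {d m : ℕ}
    (x y : EuclideanSpace ℝ (Fin (d + m))) :
    ⟪x, y⟫ = ⟪firstCoords x, firstCoords y⟫ + ⟪lastCoords x, lastCoords y⟫ := by
  simp [PiLp.inner_apply, Fin.sum_univ_add, firstCoords, lastCoords]

theorem exp_neg_mul_inner_eq_mul {d m : ℕ} (α : ℝ) (x y : EuclideanSpace ℝ (Fin (d + m))) :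
    exp (-α * ⟪x, y⟫) =
      exp (-α * ⟪firstCoords x, firstCoords y⟫) * exp (-α * ⟪lastCoords x, lastCoords y⟫) := by
  rw [← exp_add, inner_eq_inner_firstCoords_add_inner_lastCoords, mul_add]

theorem mul_inv_mul_mul_cancel_right₀ {G₀ : Type*} [CommGroupWithZero G₀] {a b c : G₀}
    (hb : b ≠ 0) : (a * b)⁻¹ * (c * b) = a⁻¹ * c := by
  rw [mul_inv, mul_mul_mul_comm, inv_mul_cancel₀ hb, mul_one]

theorem mul_inv_mul_mul_cancel_left₀ {G₀ : Type*} [CommGroupWithZero G₀] {a b c : G₀}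
    (ha : a ≠ 0) : (a * b)⁻¹ * (a * c) = b⁻¹ * c := by
  rw [mul_inv, mul_mul_mul_comm, inv_mul_cancel₀ ha, one_mul]

theorem PhiMat_eq_PsiMat {n : ℕ} (P : Measure Ω) (X : Ω → EuclideanSpace ℝ (Fin n)) (α : ℝ) :
    PhiMat P X α = PsiMat P X X α := by
  simp only [PhiMat, PsiMat, real_inner_self_eq_norm_sq]

theorem PsiMat_apply {n : ℕ} (P : Measure Ω) (X X' : Ω → EuclideanSpace ℝ (Fin n)) (α : ℝ)
    (i j : Fin n) :
    PsiMat P X X' α i j = (ZPsi P X X' α)⁻¹ * ∫ ω, exp (-α * ⟪X ω, X' ω⟫) * (X ω i * X' ω j) ∂P :=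
  rfl

instance Prod.instMeasurableNeg {G H : Type*} [MeasurableSpace G] [MeasurableSpace H] [Neg G]
    [Neg H] [MeasurableNeg G] [MeasurableNeg H] : MeasurableNeg (G × H) :=
  ⟨measurable_fst.neg.prodMk measurable_snd.neg⟩

namespace MeasureTheory.Measure

variable {G H : Type*} [MeasurableSpace G] [MeasurableSpace H]

theorem IsNegInvariant.map [InvolutiveNeg G] [MeasurableNeg G] [Neg H] [MeasurableNeg H]
    {μ : Measure G} [μ.IsNegInvariant] {f : G → H} (hf : Measurable f)
    (hodd : ∀ x, f (-x) = -f x) : (μ.map f).IsNegInvariant := by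
  refine ⟨?_⟩
  rw [neg_def, map_map measurable_neg hf]
  conv_rhs => rw [← map_neg_eq_self μ, map_map hf measurable_neg]
  congr 1
  funext x
  exact (hodd x).symm

theorem IsNegInvariant.prod [Neg G] [MeasurableNeg G] [Neg H] [MeasurableNeg H]
    (μ : Measure G) (ν : Measure H) [SFinite μ] [SFinite ν] [μ.IsNegInvariant]
    [ν.IsNegInvariant] : (μ.prod ν).IsNegInvariant :=
  ⟨by
    rw [neg_def]
    conv_rhs => rw [← map_neg_eq_self μ, ← map_neg_eq_self ν,
      map_prod_map μ ν measurable_neg measurable_neg]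
    rfl⟩

end MeasureTheory.Measure

instance gaussianReal.instIsNegInvariant (v : NNReal) : (gaussianReal 0 v).IsNegInvariant :=
  ⟨by simpa [Measure.neg_def] using gaussianReal_map_neg (μ := 0) (v := v)⟩

instance stdGaussian.instIsProbabilityMeasure (n : ℕ) : IsProbabilityMeasure (stdGaussian n) :=
  Measure.isProbabilityMeasure_map (EuclideanSpace.equiv (Fin n) ℝ).symm.continuous.aemeasurable

instance stdGaussian.instIsNegInvariant (n : ℕ) : (stdGaussian n).IsNegInvariant :=
  Measure.IsNegInvariant.map (EuclideanSpace.equiv (Fin n) ℝ).symm.continuous.measurable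
    (map_neg _)

theorem isNegInvariant_map_prodMk_self {G : Type*} [MeasurableSpace G] [InvolutiveNeg G]
    [MeasurableNeg G] {P : Measure Ω} {V : Ω → G} (hV : Measurable V)
    [(P.map V).IsNegInvariant] : (P.map fun ω => (V ω, V ω)).IsNegInvariant := by
  rw [show (fun ω => (V ω, V ω)) = (fun x => (x, x)) ∘ V from rfl,
    ← Measure.map_map (by fun_prop) hV]
  exact Measure.IsNegInvariant.map (by fun_prop) fun _ => rfl

theorem integral_comp_eq_zero_of_odd {G : Type*} [MeasurableSpace G] [AddGroup G]
    [MeasurableNeg G] {P : Measure Ω} {V : Ω → G} (hV : AEMeasurable V P)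
    [(P.map V).IsNegInvariant] {g : G → ℝ} (hg : AEStronglyMeasurable g (P.map V))
    (hodd : ∀ x, g (-x) = -g x) : ∫ ω, g (V ω) ∂P = 0 := by
  rw [← integral_map hV hg]
  have h := integral_neg_eq_self g (P.map V)
  simp only [hodd, integral_neg] at h
  linarith

namespace MeasureTheory

variable {α β γ δ : Type*} [MeasurableSpace α] [MeasurableSpace β] [MeasurableSpace γ]
  [MeasurableSpace δ]

theorem measurePreserving_prodProdProdComm (μa : Measure α) (μb : Measure β)
    (μc : Measure γ) (μd : Measure δ) [SFinite μa] [SFinite μb] [SFinite μc] [SFinite μd] :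
    MeasurePreserving (fun p : (α × β) × (γ × δ) => ((p.1.1, p.2.1), (p.1.2, p.2.2)))
      ((μa.prod μb).prod (μc.prod μd)) ((μa.prod μc).prod (μb.prod μd)) := by
  have swap_middle : MeasurePreserving (fun q : β × (γ × δ) => (q.2.1, (q.1, q.2.2)))
      (μb.prod (μc.prod μd)) (μc.prod (μb.prod μd)) :=
    ((measurePreserving_prodAssoc μc μb μd).comp
      ((Measure.measurePreserving_swap (μ := μb) (ν := μc)).prod (.id μd))).comp
      ((measurePreserving_prodAssoc μb μc μd).symm MeasurableEquiv.prodAssoc)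
  exact (((measurePreserving_prodAssoc μa μc (μb.prod μd)).symm MeasurableEquiv.prodAssoc).comp
    ((MeasurePreserving.id μa).prod swap_middle)).comp
    (measurePreserving_prodAssoc μa μb (μc.prod μd))

end MeasureTheory

namespace ProbabilityTheory

variable {α β γ δ : Type*} [MeasurableSpace α] [MeasurableSpace β] [MeasurableSpace γ]
  [MeasurableSpace δ] {P : Measure Ω} {A : Ω → α} {B : Ω → β} {C : Ω → γ} {D : Ω → δ}

theorem IndepFun.prodMk_prodMk_of_prodMk [IsFiniteMeasure P]
    (hA : Measurable A) (hB : Measurable B) (hC : Measurable C) (hD : Measurable D)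
    (h : IndepFun (fun ω => (A ω, B ω)) (fun ω => (C ω, D ω)) P) (hAB : IndepFun A B P)
    (hCD : IndepFun C D P) :
    IndepFun (fun ω => (A ω, C ω)) (fun ω => (B ω, D ω)) P := by
  have hAC : IndepFun A C P := h.comp measurable_fst measurable_fst
  have hBD : IndepFun B D P := h.comp measurable_snd measurable_snd
  have shuffle := measurePreserving_prodProdProdComm (P.map A) (P.map B) (P.map C) (P.map D)
  rw [indepFun_iff_map_prod_eq_prod_map_map hA.aemeasurable hB.aemeasurable] at hAB
  rw [indepFun_iff_map_prod_eq_prod_map_map hC.aemeasurable hD.aemeasurable] at hCD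
  rw [indepFun_iff_map_prod_eq_prod_map_map hA.aemeasurable hC.aemeasurable] at hAC
  rw [indepFun_iff_map_prod_eq_prod_map_map hB.aemeasurable hD.aemeasurable] at hBD
  rw [indepFun_iff_map_prod_eq_prod_map_map (hA.prodMk hB).aemeasurable
    (hC.prodMk hD).aemeasurable, hAB, hCD] at h
  rw [indepFun_iff_map_prod_eq_prod_map_map (hA.prodMk hC).aemeasurable
    (hB.prodMk hD).aemeasurable, hAC, hBD, ← shuffle.map_eq, ← h,
    Measure.map_map shuffle.measurable ((hA.prodMk hB).prodMk (hC.prodMk hD))]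
  rfl

theorem IdentDistrib.indepFun [IsFiniteMeasure P] {Ω' : Type*} [MeasurableSpace Ω']
    {P' : Measure Ω'} [IsFiniteMeasure P'] {A' : Ω' → α} {B' : Ω' → β}
    (h : IdentDistrib (fun ω => (A ω, B ω)) (fun ω => (A' ω, B' ω)) P P')
    (hAB : IndepFun A B P) : IndepFun A' B' P' := by
  have hA : IdentDistrib A A' P P' := h.comp measurable_fst
  have hB : IdentDistrib B B' P P' := h.comp measurable_snd
  rw [indepFun_iff_map_prod_eq_prod_map_map hA.aemeasurable_fst hB.aemeasurable_fst] at hAB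
  rw [indepFun_iff_map_prod_eq_prod_map_map hA.aemeasurable_snd hB.aemeasurable_snd,
    ← h.map_eq, hAB, hA.map_eq, hB.map_eq]

theorem IndepFun.integral_exp_pos_left [NeZero P] {A B : Ω → ℝ} (hAB : IndepFun A B P)
    (hA : AEMeasurable A P) (hB : AEMeasurable B P)
    (h : Integrable (fun ω => exp (A ω) * exp (B ω)) P) : 0 < ∫ ω, exp (A ω) ∂P := by
  have exp_B_ne_zero : ¬(fun ω => exp (B ω)) =ᵐ[P] 0 := fun h0 => by
    obtain ⟨ω, hω⟩ := h0.exists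
    exact (exp_pos (B ω)).ne' hω
  exact integral_exp_pos ((hAB.comp measurable_exp measurable_exp).integrable_left_of_integrable_op
    (· * ·) 1 one_ne_zero (fun x y => by simp [enorm_mul]) h hA.exp.aestronglyMeasurable
    hB.exp.aestronglyMeasurable exp_B_ne_zero)

end ProbabilityTheory

section BlockDiagonal

variable {P : Measure Ω} {d m : ℕ} {X X' : Ω → EuclideanSpace ℝ (Fin (d + m))} (α : ℝ)
  (hX : Measurable X) (hX' : Measurable X')
  (hindep : IndepFun (fun ω => (firstCoords (X ω), firstCoords (X' ω)))
    (fun ω => (lastCoords (X ω), lastCoords (X' ω))) P)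
include hX hX' hindep

theorem integral_eq_mul_of_indepFun_coords
    {F : Ω → ℝ} {f : EuclideanSpace ℝ (Fin d) × EuclideanSpace ℝ (Fin d) → ℝ}
    {g : EuclideanSpace ℝ (Fin m) × EuclideanSpace ℝ (Fin m) → ℝ}
    (hf : Continuous f) (hg : Continuous g)
    (hF : ∀ ω, F ω = f (firstCoords (X ω), firstCoords (X' ω)) *
      g (lastCoords (X ω), lastCoords (X' ω))) :
    ∫ ω, F ω ∂P = (∫ ω, f (firstCoords (X ω), firstCoords (X' ω)) ∂P) *
      ∫ ω, g (lastCoords (X ω), lastCoords (X' ω)) ∂P := by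
  simp_rw [hF]
  exact hindep.integral_fun_comp_mul_comp (by fun_prop) (by fun_prop) hf.aestronglyMeasurable
    hg.aestronglyMeasurable

theorem ZPsi_eq_mul :
    ZPsi P X X' α = ZPsi P (fun ω => firstCoords (X ω)) (fun ω => firstCoords (X' ω)) α *
      ZPsi P (fun ω => lastCoords (X ω)) (fun ω => lastCoords (X' ω)) α :=
  integral_eq_mul_of_indepFun_coords hX hX' hindep (f := fun u => exp (-α * ⟪u.1, u.2⟫))
    (g := fun v => exp (-α * ⟪v.1, v.2⟫)) (by fun_prop) (by fun_prop)
    fun ω => exp_neg_mul_inner_eq_mul α (X ω) (X' ω)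

theorem ZPsi_firstCoords_pos_and_ZPsi_lastCoords_pos [NeZero P]
    (hZ : Integrable (fun ω => exp (-α * ⟪X ω, X' ω⟫)) P) :
    0 < ZPsi P (fun ω => firstCoords (X ω)) (fun ω => firstCoords (X' ω)) α ∧
      0 < ZPsi P (fun ω => lastCoords (X ω)) (fun ω => lastCoords (X' ω)) α := by
  have hE : Measurable fun u : EuclideanSpace ℝ (Fin d) × EuclideanSpace ℝ (Fin d) =>
      -α * ⟪u.1, u.2⟫ := by fun_prop
  have hE' : Measurable fun v : EuclideanSpace ℝ (Fin m) × EuclideanSpace ℝ (Fin m) =>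
      -α * ⟪v.1, v.2⟫ := by fun_prop
  have hexp := hindep.comp hE hE'
  have hA : AEMeasurable (fun ω => -α * ⟪firstCoords (X ω), firstCoords (X' ω)⟫) P := by
    fun_prop
  have hB : AEMeasurable (fun ω => -α * ⟪lastCoords (X ω), lastCoords (X' ω)⟫) P := by
    fun_prop
  simp_rw [exp_neg_mul_inner_eq_mul α] at hZ
  exact ⟨hexp.integral_exp_pos_left hA hB hZ,
    hexp.symm.integral_exp_pos_left hB hA (hZ.congr (.of_forall fun _ => mul_comm _ _))⟩

theorem PsiMat_castAdd_castAdd [NeZero P] (hZ : Integrable (fun ω => exp (-α * ⟪X ω, X' ω⟫)) P)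
    (i j : Fin d) :
    PsiMat P X X' α (Fin.castAdd m i) (Fin.castAdd m j) =
      PsiMat P (fun ω => firstCoords (X ω)) (fun ω => firstCoords (X' ω)) α i j := by
  have hZG := (ZPsi_firstCoords_pos_and_ZPsi_lastCoords_pos α hX hX' hindep hZ).2
  rw [PsiMat_apply, PsiMat_apply, ZPsi_eq_mul α hX hX' hindep,
    integral_eq_mul_of_indepFun_coords hX hX' hindep
      (f := fun u => exp (-α * ⟪u.1, u.2⟫) * (u.1 i * u.2 j))
      (g := fun v => exp (-α * ⟪v.1, v.2⟫)) (by fun_prop) (by fun_prop)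
      fun ω => by simp only [exp_neg_mul_inner_eq_mul α (X ω), firstCoords_apply]; ring]
  exact mul_inv_mul_mul_cancel_right₀ hZG.ne'

theorem PsiMat_natAdd_natAdd [NeZero P] (hZ : Integrable (fun ω => exp (-α * ⟪X ω, X' ω⟫)) P)
    (i j : Fin m) :
    PsiMat P X X' α (Fin.natAdd d i) (Fin.natAdd d j) =
      PsiMat P (fun ω => lastCoords (X ω)) (fun ω => lastCoords (X' ω)) α i j := by
  have hZY := (ZPsi_firstCoords_pos_and_ZPsi_lastCoords_pos α hX hX' hindep hZ).1
  rw [PsiMat_apply, PsiMat_apply, ZPsi_eq_mul α hX hX' hindep,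
    integral_eq_mul_of_indepFun_coords hX hX' hindep
      (f := fun u => exp (-α * ⟪u.1, u.2⟫))
      (g := fun v => exp (-α * ⟪v.1, v.2⟫) * (v.1 i * v.2 j)) (by fun_prop) (by fun_prop)
      fun ω => by simp only [exp_neg_mul_inner_eq_mul α (X ω), lastCoords_apply]; ring]
  exact mul_inv_mul_mul_cancel_left₀ hZY.ne'

theorem PsiMat_castAdd_natAdd_eq_zero
    [(P.map fun ω => (lastCoords (X ω), lastCoords (X' ω))).IsNegInvariant]
    (i : Fin d) (j : Fin m) :
    PsiMat P X X' α (Fin.castAdd m i) (Fin.natAdd d j) = 0 ∧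
      PsiMat P X X' α (Fin.natAdd d j) (Fin.castAdd m i) = 0 := by
  have hV : AEMeasurable (fun ω => (lastCoords (X ω), lastCoords (X' ω))) P := by fun_prop
  have odd_fst : ∫ ω, exp (-α * ⟪lastCoords (X ω), lastCoords (X' ω)⟫) * lastCoords (X ω) j ∂P
      = 0 :=
    integral_comp_eq_zero_of_odd (g := fun v => exp (-α * ⟪v.1, v.2⟫) * v.1 j) hV
      (by fun_prop) fun v => by simp
  have odd_snd : ∫ ω, exp (-α * ⟪lastCoords (X ω), lastCoords (X' ω)⟫) * lastCoords (X' ω) j ∂P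
      = 0 :=
    integral_comp_eq_zero_of_odd (g := fun v => exp (-α * ⟪v.1, v.2⟫) * v.2 j) hV
      (by fun_prop) fun v => by simp
  constructor
  · rw [PsiMat_apply, integral_eq_mul_of_indepFun_coords hX hX' hindep
      (f := fun u => exp (-α * ⟪u.1, u.2⟫) * u.1 i)
      (g := fun v => exp (-α * ⟪v.1, v.2⟫) * v.2 j) (by fun_prop) (by fun_prop)
      fun ω => by simp only [exp_neg_mul_inner_eq_mul α (X ω), firstCoords_apply,
        lastCoords_apply]; ring, odd_snd, mul_zero, mul_zero]
  · rw [PsiMat_apply, integral_eq_mul_of_indepFun_coords hX hX' hindep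
      (f := fun u => exp (-α * ⟪u.1, u.2⟫) * u.2 i)
      (g := fun v => exp (-α * ⟪v.1, v.2⟫) * v.1 j) (by fun_prop) (by fun_prop)
      fun ω => by simp only [exp_neg_mul_inner_eq_mul α (X ω), firstCoords_apply,
        lastCoords_apply]; ring, odd_fst, mul_zero, mul_zero]

theorem PsiMat_blockDiagonal [NeZero P]
    [(P.map fun ω => (lastCoords (X ω), lastCoords (X' ω))).IsNegInvariant]
    (hZ : Integrable (fun ω => exp (-α * ⟪X ω, X' ω⟫)) P) :
    (∀ i j : Fin d, PsiMat P X X' α (Fin.castAdd m i) (Fin.castAdd m j) =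
        PsiMat P (fun ω => firstCoords (X ω)) (fun ω => firstCoords (X' ω)) α i j) ∧
    (∀ i j : Fin m, PsiMat P X X' α (Fin.natAdd d i) (Fin.natAdd d j) =
        PsiMat P (fun ω => lastCoords (X ω)) (fun ω => lastCoords (X' ω)) α i j) ∧
    (∀ (i : Fin d) (j : Fin m), PsiMat P X X' α (Fin.castAdd m i) (Fin.natAdd d j) = 0 ∧
        PsiMat P X X' α (Fin.natAdd d j) (Fin.castAdd m i) = 0) :=
  ⟨PsiMat_castAdd_castAdd α hX hX' hindep hZ, PsiMat_natAdd_natAdd α hX hX' hindep hZ,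
    PsiMat_castAdd_natAdd_eq_zero α hX hX' hindep⟩

end BlockDiagonal

section IndependentCopy

variable {P : Measure Ω} [IsProbabilityMeasure P] {d m : ℕ}
  {X X' : Ω → EuclideanSpace ℝ (Fin (d + m))}

theorem indepFun_coords_of_indepFun_copy (hX : Measurable X) (hX' : Measurable X')
    (hcopy : P.map X' = P.map X) (hindepcopy : IndepFun X X' P)
    (hindep : IndepFun (fun ω => firstCoords (X ω)) (fun ω => lastCoords (X ω)) P) :
    IndepFun (fun ω => (firstCoords (X ω), firstCoords (X' ω)))
      (fun ω => (lastCoords (X ω), lastCoords (X' ω))) P := by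
  have hcoords : Measurable fun x : EuclideanSpace ℝ (Fin (d + m)) =>
      (firstCoords x, lastCoords x) := by fun_prop
  have hXX' : IndepFun (fun ω => (firstCoords (X ω), lastCoords (X ω)))
      (fun ω => (firstCoords (X' ω), lastCoords (X' ω))) P := hindepcopy.comp hcoords hcoords
  have hlaw : IdentDistrib X X' P P := ⟨hX.aemeasurable, hX'.aemeasurable, hcopy.symm⟩
  exact hXX'.prodMk_prodMk_of_prodMk (by fun_prop) (by fun_prop) (by fun_prop) (by fun_prop)
    hindep ((hlaw.comp hcoords).indepFun hindep)

theorem isNegInvariant_map_lastCoords_of_indepFun_copy (hX : Measurable X)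
    (hX' : Measurable X') (hcopy : P.map X' = P.map X) (hindepcopy : IndepFun X X' P)
    (hgauss : P.map (fun ω => lastCoords (X ω)) = stdGaussian m) :
    (P.map fun ω => (lastCoords (X ω), lastCoords (X' ω))).IsNegInvariant := by
  have hlaw : IdentDistrib X X' P P := ⟨hX.aemeasurable, hX'.aemeasurable, hcopy.symm⟩
  have hgauss' : P.map (fun ω => lastCoords (X' ω)) = stdGaussian m :=
    (hlaw.comp measurable_lastCoords).map_eq.symm.trans hgauss
  have hGG' : IndepFun (fun ω => lastCoords (X ω)) (fun ω => lastCoords (X' ω)) P :=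
    hindepcopy.comp measurable_lastCoords measurable_lastCoords
  rw [(indepFun_iff_map_prod_eq_prod_map_map (by fun_prop) (by fun_prop)).1 hGG', hgauss,
    hgauss']
  exact .prod _ _

end IndependentCopy

theorem test_matrices_block_diagonal_general
    {Ω : Type*} [MeasurableSpace Ω] (P : Measure Ω) [IsProbabilityMeasure P]
    {d m : ℕ} (X X' : Ω → EuclideanSpace ℝ (Fin (d + m)))
    (hX : Measurable X) (hX' : Measurable X')
    (hcopy : Measure.map X' P = Measure.map X P)
    (hindepcopy : IndepFun X X' P)
    -- the isotropic NGCA model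
    (hindep : IndepFun (fun ω => firstCoords (X ω)) (fun ω => lastCoords (X ω)) P)
    (hgauss : Measure.map (fun ω => lastCoords (X ω)) P = stdGaussian m)
    -- the test matrices are defined at α
    (α : ℝ)
    (hΦZ : Integrable (fun ω => Real.exp (-α * ‖X ω‖ ^ 2)) P)
    (hΨZ : Integrable (fun ω => Real.exp (-α * ⟪X ω, X' ω⟫)) P) :
    (∀ i j : Fin d, PhiMat P X α (Fin.castAdd m i) (Fin.castAdd m j) =
        PhiMat P (fun ω => firstCoords (X ω)) α i j) ∧
    (∀ i j : Fin m, PhiMat P X α (Fin.natAdd d i) (Fin.natAdd d j) =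
        PhiMat P (fun ω => lastCoords (X ω)) α i j) ∧
    (∀ (i : Fin d) (j : Fin m), PhiMat P X α (Fin.castAdd m i) (Fin.natAdd d j) = 0 ∧
        PhiMat P X α (Fin.natAdd d j) (Fin.castAdd m i) = 0) ∧
    (∀ i j : Fin d, PsiMat P X X' α (Fin.castAdd m i) (Fin.castAdd m j) =
        PsiMat P (fun ω => firstCoords (X ω)) (fun ω => firstCoords (X' ω)) α i j) ∧
    (∀ i j : Fin m, PsiMat P X X' α (Fin.natAdd d i) (Fin.natAdd d j) =
        PsiMat P (fun ω => lastCoords (X ω)) (fun ω => lastCoords (X' ω)) α i j) ∧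
    (∀ (i : Fin d) (j : Fin m), PsiMat P X X' α (Fin.castAdd m i) (Fin.natAdd d j) = 0 ∧
        PsiMat P X X' α (Fin.natAdd d j) (Fin.castAdd m i) = 0) := by
  have : (P.map fun ω => lastCoords (X ω)).IsNegInvariant := by rw [hgauss]; infer_instance
  have := isNegInvariant_map_prodMk_self (P := P) (V := fun ω => lastCoords (X ω)) (by fun_prop)
  have := isNegInvariant_map_lastCoords_of_indepFun_copy hX hX' hcopy hindepcopy hgauss
  have hΦZ' : Integrable (fun ω => exp (-α * ⟪X ω, X ω⟫)) P := by
    simpa only [real_inner_self_eq_norm_sq] using hΦZ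
  obtain ⟨Φ_first, Φ_last, Φ_off⟩ := PsiMat_blockDiagonal α hX hX
    (hindep.comp (measurable_id.prodMk measurable_id) (measurable_id.prodMk measurable_id)) hΦZ'
  simp only [PhiMat_eq_PsiMat]
  exact ⟨Φ_first, Φ_last, Φ_off, PsiMat_blockDiagonal α hX hX'
    (indepFun_coords_of_indepFun_copy hX hX' hcopy hindepcopy hindep) hΨZ⟩

/-- **Block diagonalization of the test matrices.**  In the isotropic NGCA model with `E`
spanned by the first `d` standard basis vectors of `ℝⁿ`, `n = d + m`, the test matrices
`Φ_{X,α}` and `Ψ_{X,α}` are block diagonal with diagonal blocks the test matrices of the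
non-gaussian component `X̃` and of the gaussian component `g`, and vanishing off-diagonal
blocks. -/
theorem test_matrices_block_diagonal
    {Ω : Type*} [MeasurableSpace Ω] (P : Measure Ω) [IsProbabilityMeasure P]
    {d m : ℕ} (X X' : Ω → EuclideanSpace ℝ (Fin (d + m)))
    (hX : Measurable X) (hX' : Measurable X')
    (hcopy : Measure.map X' P = Measure.map X P)
    (hindepcopy : IndepFun X X' P)
    -- the isotropic NGCA model
    (hindep : IndepFun (fun ω => firstCoords (X ω)) (fun ω => lastCoords (X ω)) P)
    (hgauss : Measure.map (fun ω => lastCoords (X ω)) P = stdGaussian m)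
    (hmean : (∫ ω, X ω ∂P) = 0)
    (hcov : ∀ i j : Fin (d + m), (∫ ω, X ω i * X ω j ∂P) = if i = j then (1 : ℝ) else 0)
    -- the test matrices are defined at α
    (α : ℝ)
    (hΦZ : Integrable (fun ω => Real.exp (-α * ‖X ω‖ ^ 2)) P)
    (hΦint : ∀ a b : Fin (d + m),
      Integrable (fun ω => Real.exp (-α * ‖X ω‖ ^ 2) * (X ω a * X ω b)) P)
    (hΨZ : Integrable (fun ω => Real.exp (-α * ⟪X ω, X' ω⟫)) P)
    (hΨint : ∀ a b : Fin (d + m),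
      Integrable (fun ω => Real.exp (-α * ⟪X ω, X' ω⟫) * (X ω a * X' ω b)) P) :
    (∀ i j : Fin d, PhiMat P X α (Fin.castAdd m i) (Fin.castAdd m j) =
        PhiMat P (fun ω => firstCoords (X ω)) α i j) ∧
    (∀ i j : Fin m, PhiMat P X α (Fin.natAdd d i) (Fin.natAdd d j) =
        PhiMat P (fun ω => lastCoords (X ω)) α i j) ∧
    (∀ (i : Fin d) (j : Fin m), PhiMat P X α (Fin.castAdd m i) (Fin.natAdd d j) = 0 ∧
        PhiMat P X α (Fin.natAdd d j) (Fin.castAdd m i) = 0) ∧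
    (∀ i j : Fin d, PsiMat P X X' α (Fin.castAdd m i) (Fin.castAdd m j) =
        PsiMat P (fun ω => firstCoords (X ω)) (fun ω => firstCoords (X' ω)) α i j) ∧
    (∀ i j : Fin m, PsiMat P X X' α (Fin.natAdd d i) (Fin.natAdd d j) =
        PsiMat P (fun ω => lastCoords (X ω)) (fun ω => lastCoords (X' ω)) α i j) ∧
    (∀ (i : Fin d) (j : Fin m), PsiMat P X X' α (Fin.castAdd m i) (Fin.natAdd d j) = 0 ∧
        PsiMat P X X' α (Fin.natAdd d j) (Fin.castAdd m i) = 0) :=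
  test_matrices_block_diagonal_general P X X' hX hX' hcopy hindepcopy hindep hgauss α hΦZ hΨZ

end
end
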